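/- Let γ > 0 and n ∈ ℕ, and define ϵ_{m,2}(γ) = −(γ²/4) a_{m,0}(γ) + (γ/2) a_{m,1}(γ) − a_{m,2}(γ) for m ≥ 0. Then ∑_{k=−2}^{2} χ_{k,n} · ϵ_{n+k,2}(γ) = −γ²/2, where terms with n+k < 0 are omitted. -/

import Mathlib

open Real Filter MeasureTheory

noncomputable def acoef (γ : ℝ) : ℕ → ℕ → ℝ
  | n, m =>
    if m = 0 then 1
    else if n < m then 0
    else if m = n then -(γ / (n : ℝ)) * acoef γ (n - 1) (n - 1)
    else (1 / (2 * γ * (m : ℝ))) *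
      (4 * (((m + 1) / 2 : ℕ) : ℝ) ^ 2 * acoef γ n (m + 1)
        - γ ^ 2 * ∑ k ∈ (Finset.Icc (m - 1) (n - 1)).attach,
            ((n - (k : ℕ) + 1 : ℕ) : ℝ) * acoef γ (k : ℕ) (m - 1))
  termination_by n m => (n, n - m)
  decreasing_by
  · apply Prod.Lex.left; omega
  · apply Prod.Lex.right; omega
  · apply Prod.Lex.left
    have hk := k.2
    simp only [Finset.mem_Icc] at hk
    omega

/-- χ_{k,n} -/
noncomputable def chiC (n : ℕ) (k : ℤ) : ℝ :=
  if k = -2 then (n : ℝ) * ((n : ℝ) - 1)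
  else if k = -1 then -4 * (n : ℝ) ^ 2
  else if k = 0 then 2 * (3 * (n : ℝ) ^ 2 + 3 * (n : ℝ) + 1)
  else if k = 1 then -4 * ((n : ℝ) + 1) ^ 2
  else if k = 2 then ((n : ℝ) + 1) * ((n : ℝ) + 2)
  else 0

/-- the sum ∑_{k=-2}^{2} χ_{k,n} f(n+k), terms with n+k<0 omitted -/
noncomputable def sumChi (n : ℕ) (f : ℕ → ℝ) : ℝ :=
  ∑ k ∈ Finset.Icc (-2 : ℤ) 2,
    if 0 ≤ (n : ℤ) + k then chiC n k * f ((n : ℤ) + k).toNat else 0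

noncomputable def besselI0 (z : ℝ) : ℝ := ∑' k : ℕ, (z / 2) ^ (2 * k) / (k.factorial : ℝ) ^ 2

noncomputable def besselI1 (z : ℝ) : ℝ :=
  ∑' k : ℕ, (z / 2) ^ (2 * k + 1) / ((k.factorial : ℝ) * ((k + 1).factorial : ℝ))

noncomputable def psiH (k : ℕ) : ℝ := ∑ j ∈ Finset.range k, (1 : ℝ) / ((j : ℝ) + 1)

noncomputable def besselS0 (z : ℝ) : ℝ :=
  ∑' k : ℕ, psiH k * (z / 2) ^ (2 * k) / (k.factorial : ℝ) ^ 2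

noncomputable def besselS1 (z : ℝ) : ℝ :=
  -(1 / 2) * ∑' k : ℕ, (psiH (k + 1) + psiH k) * (z / 2) ^ (2 * k + 1) /
    ((k.factorial : ℝ) * ((k + 1).factorial : ℝ))

noncomputable def vPol (γ : ℝ) (n : ℕ) (r : ℝ) : ℝ :=
  ∑ m ∈ Finset.range (n / 2 + 1), acoef γ n (2 * m) * r ^ (2 * m)

noncomputable def wPol (γ : ℝ) (n : ℕ) (r : ℝ) : ℝ :=
  ∑ m ∈ Finset.range ((n - 1) / 2 + 1), acoef γ n (2 * m + 1) * r ^ (2 * m + 1)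

noncomputable def vTil (γ : ℝ) (n : ℕ) (r : ℝ) : ℝ :=
  2 * ∑ m ∈ Finset.Icc 1 (n / 2), (m : ℝ) * acoef γ n (2 * m) * r ^ (2 * m)
    - γ * ∑ m ∈ Finset.range ((n - 1) / 2 + 1), acoef γ n (2 * m + 1) * r ^ (2 * m + 2)

noncomputable def wTil (γ : ℝ) (n : ℕ) (r : ℝ) : ℝ :=
  2 * ∑ m ∈ Finset.Icc 1 ((n - 1) / 2), (m : ℝ) * acoef γ n (2 * m + 1) * r ^ (2 * m + 1)
    - γ * ∑ m ∈ Finset.range (n / 2 + 1), acoef γ n (2 * m) * r ^ (2 * m + 1)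

noncomputable def phiF (γ : ℝ) (n : ℕ) (r : ℝ) : ℝ :=
  -besselI0 (γ * r) * vPol γ n r + besselI1 (γ * r) * wPol γ n r

noncomputable def phiHat (γ : ℝ) (n : ℕ) (r : ℝ) : ℝ :=
  (-(Real.eulerMascheroniConstant + Real.log (γ / 2)) * besselI0 (γ * r) + besselS0 (γ * r)) * vPol γ n r
    + (1 / (γ * r) + (Real.eulerMascheroniConstant + Real.log (γ / 2)) * besselI1 (γ * r)
        + besselS1 (γ * r)) * wPol γ n r

noncomputable def phiTil (γ : ℝ) (n : ℕ) (r : ℝ) : ℝ :=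
  -besselI0 (γ * r) * vTil γ n r + besselI1 (γ * r) * wTil γ n r

noncomputable def phiHatTil (γ : ℝ) (n : ℕ) (r : ℝ) : ℝ :=
  (-(Real.eulerMascheroniConstant + Real.log (γ / 2)) * besselI0 (γ * r) + besselS0 (γ * r)) * vTil γ n r
    + (1 / (γ * r) + (Real.eulerMascheroniConstant + Real.log (γ / 2)) * besselI1 (γ * r)
        + besselS1 (γ * r)) * wTil γ n r

noncomputable def etaF (κ cs cp : ℝ) (ℓ n : ℕ) (r : ℝ) : ℝ :=
  (-(ℓ : ℝ)) ^ (ℓ - 1) / (κ ^ 2 * r ^ 2) *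
      sumChi n (fun j => phiF (κ / cs) j r - phiF (κ / cp) j r)
    + (-1 : ℝ) ^ (ℓ - 1) / cp ^ 2 * phiF (κ / cp) n r
    + ((ℓ : ℝ) - 1) / cs ^ 2 * phiF (κ / cs) n r

noncomputable def xiF (κ cs cp : ℝ) (ℓ n : ℕ) (r : ℝ) : ℝ :=
  (-(ℓ : ℝ)) ^ (ℓ - 1) / (κ ^ 2 * r ^ 2) *
      sumChi n (fun j => phiHat (κ / cs) j r - phiHat (κ / cp) j r)
    + (-1 : ℝ) ^ (ℓ - 1) / cp ^ 2 * phiHat (κ / cp) n r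
    + ((ℓ : ℝ) - 1) / cs ^ 2 * phiHat (κ / cs) n r

noncomputable def etaTil (κ cs cp : ℝ) (ℓ n : ℕ) (r : ℝ) : ℝ :=
  (-(ℓ : ℝ)) ^ (ℓ - 1) / (κ ^ 2 * r ^ 2) *
      sumChi n (fun j => phiTil (κ / cs) j r - 2 * phiF (κ / cs) j r
        + 2 * phiF (κ / cp) j r - phiTil (κ / cp) j r)
    + (-1 : ℝ) ^ (ℓ - 1) / cp ^ 2 * phiTil (κ / cp) n r
    + ((ℓ : ℝ) - 1) / cs ^ 2 * phiTil (κ / cs) n r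

noncomputable def xiTil (κ cs cp : ℝ) (ℓ n : ℕ) (r : ℝ) : ℝ :=
  (-(ℓ : ℝ)) ^ (ℓ - 1) / (κ ^ 2 * r ^ 2) *
      sumChi n (fun j => phiHatTil (κ / cs) j r - 2 * phiHat (κ / cs) j r
        + 2 * phiHat (κ / cp) j r - phiHatTil (κ / cp) j r)
    + (-1 : ℝ) ^ (ℓ - 1) / cp ^ 2 * phiHatTil (κ / cp) n r
    + ((ℓ : ℝ) - 1) / cs ^ 2 * phiHatTil (κ / cs) n r

/-!
Unwinding the recursion at `m = 1` expresses `(γ/2) a_{n,1} - a_{n,2}` through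
`∑_{k<n} (n - k + 1) = n(n+3)/2`, so `ε_{m,2}(γ) = -γ²(m+1)(m+2)/8` is quadratic in `m`.
The weights `χ_{k,n}` annihilate `1` and `k` and give `∑ χ_{k,n} k² = 4`; the terms with `n + k < 0`
carry zero weight anyway. Hence the `χ`-sum of `a m² + b m + c` is `4a`.
-/

open Finset

lemma two_mul_sum_range_sub_add_one (n : ℕ) :
    2 * ∑ k ∈ range n, (n - k + 1) = n * (n + 3) := by
  induction n with
  | zero => simp
  | succ n ih =>
    rw [sum_range_succ', mul_add, Nat.sub_zero]
    simp only [Nat.add_sub_add_right]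
    rw [ih]
    ring

section acoef

variable (γ : ℝ)

lemma acoef_zero_right (n : ℕ) : acoef γ n 0 = 1 := by
  rw [acoef]; simp

lemma acoef_of_lt {n m : ℕ} (h : n < m) : acoef γ n m = 0 := by
  rw [acoef, if_neg (by omega), if_pos h]

lemma acoef_self {n : ℕ} (hn : 0 < n) : acoef γ n n = -(γ / n) * acoef γ (n - 1) (n - 1) := by
  rw [acoef, if_neg (by omega), if_neg (by omega), if_pos rfl]

lemma acoef_of_pos_of_lt {n m : ℕ} (hm : 0 < m) (hmn : m < n) :
    acoef γ n m = 1 / (2 * γ * m) *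
      (4 * (((m + 1) / 2 : ℕ) : ℝ) ^ 2 * acoef γ n (m + 1)
        - γ ^ 2 * ∑ k ∈ Icc (m - 1) (n - 1), ((n - k + 1 : ℕ) : ℝ) * acoef γ k (m - 1)) := by
  rw [acoef, if_neg (by omega), if_neg (by omega), if_neg (by omega),
    sum_attach (Icc (m - 1) (n - 1)) (fun k => ((n - k + 1 : ℕ) : ℝ) * acoef γ k (m - 1))]

lemma acoef_one (n : ℕ) :
    acoef γ (n + 2) 1 = 1 / (2 * γ) *
      (4 * acoef γ (n + 2) 2 - γ ^ 2 * (((n : ℝ) + 2) * ((n : ℝ) + 5) / 2)) := by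
  have hIcc : Icc (1 - 1) (n + 2 - 1) = range (n + 2) := by
    ext k; simp only [mem_Icc, mem_range]; omega
  have hsum : ∑ k ∈ range (n + 2), ((n + 2 - k + 1 : ℕ) : ℝ) = ((n : ℝ) + 2) * (n + 5) / 2 := by
    have h : (∑ k ∈ range (n + 2), (n + 2 - k + 1)) * 2 = (n + 2) * (n + 5) := by
      rw [mul_comm, two_mul_sum_range_sub_add_one]
    rw [← Nat.cast_sum, eq_div_iff two_ne_zero]
    exact_mod_cast h
  rw [acoef_of_pos_of_lt γ one_pos (by omega), hIcc, Nat.sub_self]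
  simp only [acoef_zero_right, mul_one, hsum]
  norm_num

end acoef

noncomputable def epsTwo (γ : ℝ) (m : ℕ) : ℝ :=
  -(γ ^ 2 / 4) * acoef γ m 0 + (γ / 2) * acoef γ m 1 - acoef γ m 2

lemma epsTwo_eq {γ : ℝ} (hγ : γ ≠ 0) (m : ℕ) :
    epsTwo γ m = -(γ ^ 2 / 8) * ((m : ℝ) + 1) * ((m : ℝ) + 2) := by
  match m with
  | 0 =>
    simp only [epsTwo, acoef_zero_right, acoef_of_lt γ (by omega : 0 < 1),
      acoef_of_lt γ (by omega : 0 < 2)]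
    ring
  | 1 =>
    rw [epsTwo, acoef_zero_right, acoef_self γ one_pos, acoef_of_lt γ (by omega : 1 < 2),
      Nat.sub_self, acoef_zero_right]
    push_cast
    ring
  | n + 2 =>
    rw [epsTwo, acoef_zero_right, acoef_one]
    field_simp
    push_cast
    ring

lemma chiC_eq_zero_of_add_neg {n : ℕ} {k : ℤ} (hk : -2 ≤ k) (h : (n : ℤ) + k < 0) :
    chiC n k = 0 := by
  obtain ⟨rfl, hn⟩ | ⟨rfl, rfl⟩ : (k = -2 ∧ n ≤ 1) ∨ (k = -1 ∧ n = 0) := by omega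
  · interval_cases n <;> norm_num [chiC]
  · norm_num [chiC]

lemma sumChi_eq_sum {n : ℕ} {f : ℕ → ℝ} (g : ℤ → ℝ) (hfg : ∀ m : ℕ, f m = g m) :
    sumChi n f = ∑ k ∈ Icc (-2 : ℤ) 2, chiC n k * g (n + k) := by
  refine sum_congr rfl fun k hk => ?_
  split_ifs with h
  · rw [hfg, Int.toNat_of_nonneg h]
  · rw [chiC_eq_zero_of_add_neg (mem_Icc.1 hk).1 (not_le.1 h), zero_mul]

lemma sumChi_quadratic (n : ℕ) (a b c : ℝ) :
    sumChi n (fun m => a * (m : ℝ) ^ 2 + b * m + c) = 4 * a := by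
  rw [sumChi_eq_sum (fun x : ℤ => a * (x : ℝ) ^ 2 + b * x + c) (fun m => by push_cast; rfl)]
  rw [show Icc (-2 : ℤ) 2 = {-2, -1, 0, 1, 2} from rfl]
  rw [sum_insert (by decide), sum_insert (by decide), sum_insert (by decide),
    sum_insert (by decide), sum_singleton]
  norm_num [chiC]
  ring

/-- ∑_{k=-2}^{2} χ_{k,n} ε_{n+k,2}(γ) = −γ²/2, where
ε_{m,2}(γ) = −(γ²/4) a_{m,0}(γ) + (γ/2) a_{m,1}(γ) − a_{m,2}(γ). -/
theorem sumChi_eps_two (γ : ℝ) (hγ : 0 < γ) (n : ℕ) :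
    sumChi n (fun m => -(γ ^ 2 / 4) * acoef γ m 0 + (γ / 2) * acoef γ m 1 - acoef γ m 2)
      = -γ ^ 2 / 2 := by
  have hquad : epsTwo γ = fun m : ℕ => -(γ ^ 2 / 8) * (m : ℝ) ^ 2 + -(3 * γ ^ 2 / 8) * m
      + -(γ ^ 2 / 4) :=
    funext fun m => by rw [epsTwo_eq hγ.ne']; ring
  change sumChi n (epsTwo γ) = _
  rw [hquad, sumChi_quadratic]
  ring
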